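/- Let 𝓑 be an almost disjoint family of infinite subsets of ω×2 and 𝔅 = [𝓑 ∪ fin(ω×2)] the algebra generated by 𝓑 together with all finite sets. If a set of measures M ⊆ M₁(𝔅) is contained in a free subset of M₁(𝔅), then for every Z ∈ 𝔅 and every ε > 0 there is a simple 𝔅-measurable function g ∈ s(𝔅) such that for every μ ∈ M one has | ⟨μ, g⟩ − |μ(Z)| | < ε. -/

import Mathlib

open scoped ENNReal

/-- `m` is finitely additive on the algebra `𝔄` of subsets of `S`. -/
def FinAddOn {S : Type*} (𝔄 : Set (Set S)) (m : Set S → ℝ) : Prop :=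
  ∀ A ∈ 𝔄, ∀ B ∈ 𝔄, Disjoint A B → m (A ∪ B) = m A + m B

/-- `m` has variation norm `‖m‖ = |m|(S) ≤ 1` on the algebra `𝔄`. -/
def VarLeOne {S : Type*} (𝔄 : Set (Set S)) (m : Set S → ℝ) : Prop :=
  ∀ B ∈ 𝔄, |m B| + |m Bᶜ| ≤ 1

/-- `M₁(P(S))`: the finitely additive measures of norm at most `1` on the full power
set algebra of `S`. -/
def M1full (S : Type*) : Set (Set S → ℝ) :=
  {m | FinAddOn (Set.univ : Set (Set S)) m ∧ VarLeOne (Set.univ : Set (Set S)) m}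

/-- The pair `(M, M')` is `𝔅`-separated: there are `ε > 0` and finitely many sets
`B₁, …, B_n ∈ 𝔅` such that for every `(μ, μ') ∈ M × M'` there is `i ≤ n` with
`|μ(B_i) − μ'(B_i)| ≥ ε`. -/
def SeparatedBy {S : Type*} (𝔅 : Set (Set S)) (M M' : Set (Set S → ℝ)) : Prop :=
  ∃ ε > (0 : ℝ), ∃ n : ℕ, 0 < n ∧ ∃ B : Fin n → Set S, (∀ i, B i ∈ 𝔅) ∧
    ∀ m ∈ M, ∀ m' ∈ M', ∃ i, ε ≤ |m (B i) - m' (B i)|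

/-- The characteristic function of a set `B`, as an element of `ℓ∞`. -/
noncomputable def ind {S : Type*} (B : Set S) : lp (fun _ : S => ℝ) ∞ :=
  ⟨B.indicator (fun _ => (1 : ℝ)), by
    apply memℓp_infty
    refine ⟨1, ?_⟩
    rintro x ⟨s, rfl⟩
    by_cases h : s ∈ B <;> simp [h]⟩

/-- The closure in `ℓ∞(S)` of the space of simple `𝔄`-measurable functions,
i.e. the closed linear span of the characteristic functions of members of `𝔄`. -/
noncomputable def Xsp {S : Type*} (𝔄 : Set (Set S)) : Submodule ℝ (lp (fun _ : S => ℝ) ∞) :=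
  (Submodule.span ℝ (ind '' 𝔄)).topologicalClosure

/-- The characteristic function of `B ∈ 𝔄`, as an element of `X_𝔄`. -/
noncomputable def indX {S : Type*} (𝔄 : Set (Set S)) (B : Set S) (hB : B ∈ 𝔄) : ↥(Xsp 𝔄) :=
  ⟨ind B, Submodule.le_topologicalClosure _ (Submodule.subset_span ⟨B, hB, rfl⟩)⟩

/-- A set `F` of functionals (in the weak* topology) is free if every weak*-continuous
real-valued function on `F` is the evaluation of some element of `X`. -/
def FreeSet {X : Type*} [NormedAddCommGroup X] [NormedSpace ℝ X]
    (F : Set (WeakDual ℝ X)) : Prop :=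
  ∀ f : F → ℝ, Continuous f → ∃ x : X, ∀ φ (hφ : φ ∈ F), f ⟨φ, hφ⟩ = φ x

/-- Membership in the algebra of sets generated by a family `G` of subsets of `S`. -/
inductive genAlgMem {S : Type*} (G : Set (Set S)) : Set S → Prop
  | base {A : Set S} : A ∈ G → genAlgMem G A
  | empty : genAlgMem G ∅
  | compl {A : Set S} : genAlgMem G A → genAlgMem G Aᶜ
  | union {A B : Set S} : genAlgMem G A → genAlgMem G B → genAlgMem G (A ∪ B)

/-- The algebra of subsets of `S` generated by a family `G`. -/
def genAlg {S : Type*} (G : Set (Set S)) : Set (Set S) := {A | genAlgMem G A}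

/-- The underlying countable set `ω × 2`. -/
abbrev S2 : Type := ℕ × Fin 2

/-! The map `φ ↦ |φ(χ_Z)|` is weak*-continuous, so on a free set `F` it is evaluation at some
`x ∈ X_𝔅`. Since `x` is a norm limit of simple functions and every `φ ∈ F` has norm at most `1`, a
simple function `g` with `‖x - g‖ < ε` gives `|φ(g) - |φ(χ_Z)|| < ε` uniformly on `F`. -/

theorem FreeSet.exists_mem_forall_abs_sub_lt {X : Type*} [NormedAddCommGroup X] [NormedSpace ℝ X]
    {F : Set (WeakDual ℝ X)} (hF : FreeSet F) (hnorm : ∀ φ ∈ F, ‖WeakDual.toStrongDual φ‖ ≤ 1)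
    {f : F → ℝ} (hf : Continuous f) {D : Set X} (hD : Dense D) {ε : ℝ} (hε : 0 < ε) :
    ∃ y ∈ D, ∀ φ (hφ : φ ∈ F), |φ y - f ⟨φ, hφ⟩| < ε := by
  obtain ⟨x, hx⟩ := hF f hf
  obtain ⟨y, hyD, hxy⟩ := hD.exists_dist_lt x hε
  refine ⟨y, hyD, fun φ hφ => ?_⟩
  calc |φ y - f ⟨φ, hφ⟩| = ‖WeakDual.toStrongDual φ (y - x)‖ := by
        rw [hx φ hφ, map_sub, Real.norm_eq_abs]; rfl
    _ ≤ 1 * ‖y - x‖ := (WeakDual.toStrongDual φ).le_of_opNorm_le (hnorm φ hφ) _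
    _ < ε := by rwa [one_mul, ← dist_eq_norm, dist_comm]

section SimpleFunctions

variable {S : Type*} (𝔄 : Set (Set S))

/-- The simple `𝔄`-measurable functions `s(𝔄)`, as a subspace of `X_𝔄`. -/
noncomputable def simpleSpan : Submodule ℝ (Xsp 𝔄) :=
  Submodule.span ℝ (Set.range fun B : 𝔄 => indX 𝔄 B B.2)

theorem image_val_simpleSpan :
    Subtype.val '' (simpleSpan 𝔄 : Set (Xsp 𝔄)) = Submodule.span ℝ (ind '' 𝔄) := by
  have hgen : (Xsp 𝔄).subtype '' Set.range (fun B : 𝔄 => indX 𝔄 B B.2) = ind '' 𝔄 := by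
    ext y
    constructor
    · rintro ⟨_, ⟨B, rfl⟩, rfl⟩
      exact ⟨B, B.2, rfl⟩
    · rintro ⟨B, hB, rfl⟩
      exact ⟨_, ⟨⟨B, hB⟩, rfl⟩, rfl⟩
  rw [← hgen, Submodule.span_image]
  rfl

theorem dense_simpleSpan : Dense (simpleSpan 𝔄 : Set (Xsp 𝔄)) := fun x => by
  rw [closure_subtype, image_val_simpleSpan, ← Submodule.topologicalClosure_coe]
  exact x.2

variable {𝔄}

theorem exists_eq_sum_of_mem_simpleSpan {y : Xsp 𝔄} (hy : y ∈ simpleSpan 𝔄) :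
    ∃ (n : ℕ) (r : Fin n → ℝ) (B : Fin n → 𝔄), y = ∑ i, r i • indX 𝔄 (B i) (B i).2 := by
  obtain ⟨n, r, g, rfl⟩ := Submodule.mem_span_set'.mp hy
  choose B hB using fun i => (g i).2
  exact ⟨n, r, B, Finset.sum_congr rfl fun i _ => by rw [← hB i]⟩

end SimpleFunctions

theorem statement9_general (𝓑 : Set (Set S2))
    (M : Set (Set S2 → ℝ))
    -- `M` is contained in a free subset of `M₁(𝔅)`
    (hfree : ∃ F : Set (WeakDual ℝ ↥(Xsp (genAlg (𝓑 ∪ {F : Set S2 | F.Finite})))),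
      IsClosed F ∧ (∀ φ ∈ F, ‖WeakDual.toStrongDual φ‖ ≤ 1) ∧ FreeSet F ∧
      ∀ m ∈ M, ∃ φ ∈ F, ∀ B (hB : B ∈ genAlg (𝓑 ∪ {F : Set S2 | F.Finite})),
        φ (indX _ B hB) = m B) :
    ∀ Z ∈ genAlg (𝓑 ∪ {F : Set S2 | F.Finite}), ∀ ε > (0 : ℝ),
      ∃ (n : ℕ) (r : Fin n → ℝ) (Bs : Fin n → Set S2),
        (∀ i, Bs i ∈ genAlg (𝓑 ∪ {F : Set S2 | F.Finite})) ∧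
        ∀ m ∈ M, |(∑ i, r i * m (Bs i)) - (|m Z|)| < ε := by
  intro Z hZ ε hε
  obtain ⟨F, -, hnorm, hF, hrep⟩ := hfree
  have hcont : Continuous fun φ : F => |(φ : WeakDual ℝ _) (indX _ Z hZ)| :=
    continuous_abs.comp ((WeakDual.eval_continuous _).comp continuous_subtype_val)
  obtain ⟨y, hy, hyapprox⟩ :=
    hF.exists_mem_forall_abs_sub_lt hnorm hcont (dense_simpleSpan _) hε
  obtain ⟨n, r, B, rfl⟩ := exists_eq_sum_of_mem_simpleSpan hy
  refine ⟨n, r, fun i => B i, fun i => (B i).2, fun m hm => ?_⟩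
  obtain ⟨φ, hφ, hφm⟩ := hrep m hm
  simpa [map_sum, hφm] using hyapprox φ hφ

/-- Let `𝓑` be an almost disjoint family of infinite subsets of `ω × 2` and
`𝔅 = [𝓑 ∪ fin(ω × 2)]`. If a set `M` of measures in `M₁(𝔅)` is contained in a free
subset of `M₁(𝔅)` (measures being identified with functionals on the closure `X_𝔅` of
the simple `𝔅`-measurable functions in `ℓ∞`), then for every `Z ∈ 𝔅` and every `ε > 0`
there is a simple `𝔅`-measurable function `g = Σ r_i·χ_{B_i}` such that
`| ⟨μ, g⟩ − |μ(Z)| | < ε` for every `μ ∈ M`. -/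
theorem statement9 (𝓑 : Set (Set S2)) (hinf : ∀ B ∈ 𝓑, B.Infinite)
    (had : ∀ B ∈ 𝓑, ∀ B' ∈ 𝓑, B ≠ B' → (B ∩ B').Finite)
    (M : Set (Set S2 → ℝ))
    (hM : ∀ m ∈ M, FinAddOn (genAlg (𝓑 ∪ {F : Set S2 | F.Finite})) m ∧
      VarLeOne (genAlg (𝓑 ∪ {F : Set S2 | F.Finite})) m)
    -- `M` is contained in a free subset of `M₁(𝔅)`
    (hfree : ∃ F : Set (WeakDual ℝ ↥(Xsp (genAlg (𝓑 ∪ {F : Set S2 | F.Finite})))),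
      IsClosed F ∧ (∀ φ ∈ F, ‖WeakDual.toStrongDual φ‖ ≤ 1) ∧ FreeSet F ∧
      ∀ m ∈ M, ∃ φ ∈ F, ∀ B (hB : B ∈ genAlg (𝓑 ∪ {F : Set S2 | F.Finite})),
        φ (indX _ B hB) = m B) :
    ∀ Z ∈ genAlg (𝓑 ∪ {F : Set S2 | F.Finite}), ∀ ε > (0 : ℝ),
      ∃ (n : ℕ) (r : Fin n → ℝ) (Bs : Fin n → Set S2),
        (∀ i, Bs i ∈ genAlg (𝓑 ∪ {F : Set S2 | F.Finite})) ∧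
        ∀ m ∈ M, |(∑ i, r i * m (Bs i)) - (|m Z|)| < ε :=
  statement9_general 𝓑 M hfree
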